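/- arXiv:2210.10567 — 2 statements merged into one kernel-verified Lean document; each statement's English description precedes it below -/
import Mathlib

section
/- Any two optimal solutions (w¹, b¹, ξ¹) and (w², b², ξ²) of the soft-margin SVM problem satisfy w¹ = w², i.e., the weight vector w is unique at the optimum. -/
/-- Any two optimal solutions of the soft-margin SVM problem have the same
weight vector `w`. -/
theorem svm_w_unique {ι : Type*} [Fintype ι] [Nonempty ι] (n : ℕ)
    (x : ι → Fin n → ℝ) (y : ι → ℝ) (hy : ∀ i, y i = 1 ∨ y i = -1)
    (C : ℝ) (hC : 0 < C)
    (w₁ w₂ : Fin n → ℝ) (b₁ b₂ : ℝ) (ξ₁ ξ₂ : ι → ℝ)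
    (hξ₁ : ∀ i, 0 ≤ ξ₁ i) (hξ₂ : ∀ i, 0 ≤ ξ₂ i)
    (hcon₁ : ∀ i, y i * (∑ j, w₁ j * x i j + b₁) ≥ 1 - ξ₁ i)
    (hcon₂ : ∀ i, y i * (∑ j, w₂ j * x i j + b₂) ≥ 1 - ξ₂ i)
    (hopt₁ : ∀ (w : Fin n → ℝ) (b : ℝ) (ξ : ι → ℝ),
      (∀ i, 0 ≤ ξ i) → (∀ i, y i * (∑ j, w j * x i j + b) ≥ 1 - ξ i) →
      (1/2) * ∑ j, (w₁ j)^2 + C * ∑ i, ξ₁ i ≤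
        (1/2) * ∑ j, (w j)^2 + C * ∑ i, ξ i)
    (hopt₂ : ∀ (w : Fin n → ℝ) (b : ℝ) (ξ : ι → ℝ),
      (∀ i, 0 ≤ ξ i) → (∀ i, y i * (∑ j, w j * x i j + b) ≥ 1 - ξ i) →
      (1/2) * ∑ j, (w₂ j)^2 + C * ∑ i, ξ₂ i ≤
        (1/2) * ∑ j, (w j)^2 + C * ∑ i, ξ i) :
    w₁ = w₂ := by
  set w : Fin n → ℝ := fun j => (w₁ j + w₂ j) / 2 with hw
  set ξ : ι → ℝ := fun i => (ξ₁ i + ξ₂ i) / 2 with hξ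
  have hξ0 : ∀ i, 0 ≤ ξ i := fun i => by
    have := hξ₁ i; have := hξ₂ i; simp only [hξ]; linarith
  have hcon : ∀ i, y i * (∑ j, w j * x i j + (b₁ + b₂) / 2) ≥ 1 - ξ i := by
    intro i
    have h1 := hcon₁ i
    have h2 := hcon₂ i
    have hsum : ∑ j, w j * x i j = (∑ j, w₁ j * x i j + ∑ j, w₂ j * x i j) / 2 := by
      rw [← Finset.sum_add_distrib, Finset.sum_div]
      exact Finset.sum_congr rfl fun j _ => by simp [hw]; ring
    rw [hsum]
    simp only [hξ]
    nlinarith [h1, h2]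
  -- objectives are equal
  have heq : (1/2) * ∑ j, (w₁ j)^2 + C * ∑ i, ξ₁ i
      = (1/2) * ∑ j, (w₂ j)^2 + C * ∑ i, ξ₂ i :=
    le_antisymm (hopt₁ w₂ b₂ ξ₂ hξ₂ hcon₂) (hopt₂ w₁ b₁ ξ₁ hξ₁ hcon₁)
  have hmid := hopt₁ w ((b₁ + b₂) / 2) ξ hξ0 hcon
  have hsumw : ∑ j, (w j)^2
      = (∑ j, (w₁ j)^2) / 2 + (∑ j, (w₂ j)^2) / 2 - (∑ j, (w₁ j - w₂ j)^2) / 4 := by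
    have : ∀ j : Fin n, (w j)^2 = (w₁ j)^2 / 2 + (w₂ j)^2 / 2 - (w₁ j - w₂ j)^2 / 4 := by
      intro j; simp only [hw]; ring
    rw [Finset.sum_congr rfl fun j _ => this j, Finset.sum_sub_distrib,
      Finset.sum_add_distrib, ← Finset.sum_div, ← Finset.sum_div, ← Finset.sum_div]
  have hsumξ : ∑ i, ξ i = (∑ i, ξ₁ i) / 2 + (∑ i, ξ₂ i) / 2 := by
    simp only [hξ]
    rw [Finset.sum_congr rfl (fun i _ => by ring : ∀ i ∈ Finset.univ, (ξ₁ i + ξ₂ i)/2 = ξ₁ i / 2 + ξ₂ i / 2),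
      Finset.sum_add_distrib, ← Finset.sum_div, ← Finset.sum_div]
  rw [hsumw, hsumξ] at hmid
  have hdiff : ∑ j, (w₁ j - w₂ j)^2 ≤ 0 := by linarith
  have hdiff0 : ∀ j, (w₁ j - w₂ j)^2 = 0 := by
    intro j
    have hnn : ∀ k ∈ Finset.univ, (0:ℝ) ≤ (w₁ k - w₂ k)^2 := fun k _ => sq_nonneg _
    have := Finset.sum_nonneg hnn
    have hz : ∑ j, (w₁ j - w₂ j)^2 = 0 := le_antisymm hdiff this
    exact (Finset.sum_eq_zero_iff_of_nonneg hnn).mp hz j (Finset.mem_univ j)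
  funext j
  have := sub_eq_zero.mp (pow_eq_zero_iff (by norm_num) |>.mp (hdiff0 j))
  linarith
end

section
/- With w = 0 fixed and feasibility requiring |b| ≥ 1 − ξᵢ for the majority-label samples (ξᵢ = 0) and ξᵢ ≥ 1 + |b| for the minority-label samples, each minority sample contributes exactly 2C to the optimal objective: at any optimal (b, ξ), ξᵢ = 2 for every minority-label sample i. -/
open scoped Classical

/-- With `w = 0` fixed and the majority label strictly more frequent, at any
optimal `(b, ξ)` of the subproblem every minority-label sample has slack
exactly `2`. -/
theorem svm_w0_minority_slack {ι : Type*} [Fintype ι]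
    (y : ι → ℝ) (hy : ∀ i, y i = 1 ∨ y i = -1)
    (yhat : ℝ) (hyhat : yhat = 1 ∨ yhat = -1)
    (hmaj : (Finset.univ.filter fun i => y i = yhat).card >
            (Finset.univ.filter fun i => y i = -yhat).card)
    (C : ℝ) (hC : 0 < C)
    (b : ℝ) (ξ : ι → ℝ)
    (hξ : ∀ i, 0 ≤ ξ i)
    (hcon : ∀ i, y i * b ≥ 1 - ξ i)
    (hopt : ∀ (b' : ℝ) (ξ' : ι → ℝ),
      (∀ i, 0 ≤ ξ' i) → (∀ i, y i * b' ≥ 1 - ξ' i) →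
      C * ∑ i, ξ i ≤ C * ∑ i, ξ' i) :
    ∀ i, y i = -yhat → ξ i = 2 := by
  intro i0 hi0
  classical
  set S := Finset.univ.filter fun i => y i = yhat with hS
  set T := Finset.univ.filter fun i => y i = -yhat with hT
  have hyhat2 : yhat * yhat = 1 := by rcases hyhat with h | h <;> simp [h]
  have hne : yhat ≠ -yhat := by rcases hyhat with h | h <;> norm_num [h]
  have hdichot : ∀ i, y i = yhat ∨ y i = -yhat := by
    intro i; rcases hy i with h | h <;> rcases hyhat with h' | h' <;>
      simp [h, h'] <;> norm_num
  have hTcompl : Finset.univ.filter (fun i => ¬ y i = yhat) = T := by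
    ext i
    simp only [Finset.mem_filter, Finset.mem_univ, true_and, hT]
    constructor
    · intro h; rcases hdichot i with h' | h' ; · exact absurd h' h
      exact h'
    · intro h; rw [h]; exact fun h' => hne h'.symm
  -- upper bound via the candidate (yhat, indicator)
  have key := hopt yhat (fun i => if y i = yhat then 0 else 2)
    (by intro i; split <;> norm_num)
    (by
      intro i
      rcases hdichot i with h | h
      · simp [h, hyhat2]
      · rw [if_neg (by rw [h]; exact fun h' => hne h'.symm), h]
        nlinarith [hyhat2])
  have hsumind : ∑ i, (if y i = yhat then (0:ℝ) else 2) = 2 * T.card := by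
    rw [Finset.sum_ite, hTcompl]
    simp [Finset.sum_const, mul_comm]
  have hub : ∑ i, ξ i ≤ 2 * T.card := by
    rw [hsumind] at key
    exact le_of_mul_le_mul_left key hC
  -- split the sum
  have hsplit : ∑ i ∈ S, ξ i + ∑ i ∈ T, ξ i = ∑ i, ξ i := by
    rw [← hTcompl]
    exact Finset.sum_filter_add_sum_filter_not _ _ _
  have hi0T : i0 ∈ T := by simp [hT, hi0]
  have hTbound : ∀ i ∈ T, 1 + yhat * b ≤ ξ i := by
    intro i hi
    have hyi : y i = -yhat := by simpa [hT] using hi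
    have := hcon i
    rw [hyi] at this
    linarith
  have hSbound : ∀ i ∈ S, 1 - yhat * b ≤ ξ i := by
    intro i hi
    have hyi : y i = yhat := by simpa [hS] using hi
    have := hcon i
    rw [hyi] at this
    linarith
  have hSnn : (0:ℝ) ≤ ∑ i ∈ S, ξ i := Finset.sum_nonneg fun i _ => hξ i
  have hTnn : (0:ℝ) ≤ ∑ i ∈ T, ξ i := Finset.sum_nonneg fun i _ => hξ i
  have hTlow : (T.card : ℝ) * (1 + yhat * b) ≤ ∑ i ∈ T, ξ i := by
    calc (T.card : ℝ) * (1 + yhat * b) = ∑ _i ∈ T, (1 + yhat * b) := by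
          rw [Finset.sum_const, nsmul_eq_mul]
      _ ≤ ∑ i ∈ T, ξ i := Finset.sum_le_sum hTbound
  have hSlow : (S.card : ℝ) * (1 - yhat * b) ≤ ∑ i ∈ S, ξ i := by
    calc (S.card : ℝ) * (1 - yhat * b) = ∑ _i ∈ S, (1 - yhat * b) := by
          rw [Finset.sum_const, nsmul_eq_mul]
      _ ≤ ∑ i ∈ S, ξ i := Finset.sum_le_sum hSbound
  have hm1 : (1:ℝ) ≤ T.card := by
    have : 0 < T.card := Finset.card_pos.mpr ⟨i0, hi0T⟩
    exact_mod_cast this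
  have hMm : (T.card : ℝ) < S.card := by exact_mod_cast hmaj
  -- show yhat * b = 1
  have ht : yhat * b = 1 := by
    by_contra h
    rcases lt_or_gt_of_ne h with hlt | hgt
    · rcases le_or_gt (-1) (yhat * b) with h1 | h1
      · nlinarith
      · nlinarith
    · nlinarith
  -- conclude
  have hge : (2:ℝ) ≤ ξ i0 := by have := hTbound i0 hi0T; linarith [ht ▸ this]
  have hle : ξ i0 ≤ 2 := by
    by_contra h
    push_neg at h
    have hlt : ∑ _i ∈ T, (2:ℝ) < ∑ i ∈ T, ξ i :=
      Finset.sum_lt_sum (fun i hi => by have := hTbound i hi; rw [ht] at this; linarith)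
        ⟨i0, hi0T, h⟩
    rw [Finset.sum_const, nsmul_eq_mul] at hlt
    linarith
  linarith
end
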